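/- Let F be a smooth 2-form on ℝ⁴. Then dF vanishes identically on ℝ⁴ if and only if for every x ∈ ℝ⁴ and every μ ∈ {0,1,2,3} the transversal component of dF in frame μ vanishes, i.e. dF(x)(X⁽μ⁾₁, X⁽μ⁾₂, X⁽μ⁾₃) = 0. In other words, the full homogeneous Maxwell equation dF = 0 is equivalent to the validity of the magnetic-flux constraint in the four boosted reference frames. -/

import Mathlib

set_option linter.unusedSectionVars false


noncomputable section

/-- ℝ⁴, the Minkowski spacetime manifold. -/
abbrev V4 : Type := Fin 4 → ℝ

/-- The standard basis e₀, e₁, e₂, e₃ of ℝ⁴. -/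
def e (i : Fin 4) : V4 := Pi.single i 1

/-- Contravariant part Γ⁽μ⁾ of the frame μ: Γ⁽⁰⁾ = e₀ and, for j ∈ {1,2,3},
Γ⁽ʲ⁾ = γ e₀ + βγ e_j (boost along e_j). -/
def Γfr (β γ : ℝ) (μ : Fin 4) : V4 :=
  if μ = 0 then e 0 else γ • e 0 + (β * γ) • e μ

/-- Spatial vectors X⁽μ⁾ₖ (k = 1,2,3, indexed by `k : Fin 3` ↦ spatial index `k+1`):
for the fiducial frame X⁽⁰⁾ₖ = eₖ; for the frame boosted along e_j,
X⁽ʲ⁾ⱼ = βγ e₀ + γ e_j and X⁽ʲ⁾ₖ = eₖ for k ≠ j. -/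
def Xfr (β γ : ℝ) (μ : Fin 4) (k : Fin 3) : V4 :=
  if k.succ = μ then (β * γ) • e 0 + γ • e μ else e k.succ

/-- Exterior derivative of a smooth p-form ω (given by its values
ω x (v₁, …, v_p) as a function): (dω)(x)(v₀, …, v_p)
= Σᵢ (−1)ⁱ (Dω(x) vᵢ)(v₀, …, v̂ᵢ, …, v_p), where Dω(x) is the Fréchet derivative. -/
def extD {E : Type*} [NormedAddCommGroup E] [NormedSpace ℝ E] {p : ℕ}
    (η : E → (Fin p → E) → ℝ) (x : E) (v : Fin (p + 1) → E) : ℝ :=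
  ∑ i : Fin (p + 1),
    (-1 : ℝ) ^ (i : ℕ) * fderiv ℝ (fun y => η y (fun j => v (i.succAbove j))) x (v i)

noncomputable def Dd (F : V4 → AlternatingMap ℝ V4 ℝ (Fin 2)) (x v a b : V4) : ℝ :=
  fderiv ℝ (fun y => F y ![a, b]) x v

lemma upd0 (a b c : V4) : Function.update ![a, b] 0 c = ![c, b] := by
  funext i; fin_cases i <;> simp
lemma upd1 (a b c : V4) : Function.update ![a, b] 1 c = ![a, c] := by
  funext i; fin_cases i <;> simp

section
variable (F : V4 → AlternatingMap ℝ V4 ℝ (Fin 2))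
  (hd : ∀ w : Fin 2 → V4, Differentiable ℝ fun y => F y w)
include hd

lemma Dd_add_a (x v a a' b : V4) :
    Dd F x v (a + a') b = Dd F x v a b + Dd F x v a' b := by
  have h : (fun y => F y ![a + a', b]) = fun y => F y ![a, b] + F y ![a', b] := by
    funext y
    have := (F y).map_update_add ![a, b] 0 a a'
    rwa [upd0, upd0, upd0] at this
  unfold Dd
  rw [h, fderiv_fun_add ((hd _).differentiableAt) ((hd _).differentiableAt)]
  simp

lemma Dd_smul_a (x v a b : V4) (c : ℝ) :
    Dd F x v (c • a) b = c * Dd F x v a b := by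
  have h : (fun y => F y ![c • a, b]) = fun y => c • F y ![a, b] := by
    funext y
    have := (F y).map_update_smul ![a, b] 0 c a
    rwa [upd0, upd0] at this
  unfold Dd
  rw [h, fderiv_fun_const_smul ((hd _).differentiableAt) c]
  simp

lemma Dd_add_b (x v a b b' : V4) :
    Dd F x v a (b + b') = Dd F x v a b + Dd F x v a b' := by
  have h : (fun y => F y ![a, b + b']) = fun y => F y ![a, b] + F y ![a, b'] := by
    funext y
    have := (F y).map_update_add ![a, b] 1 b b'
    rwa [upd1, upd1, upd1] at this
  unfold Dd
  rw [h, fderiv_fun_add ((hd _).differentiableAt) ((hd _).differentiableAt)]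
  simp

lemma Dd_smul_b (x v a b : V4) (c : ℝ) :
    Dd F x v a (c • b) = c * Dd F x v a b := by
  have h : (fun y => F y ![a, c • b]) = fun y => c • F y ![a, b] := by
    funext y
    have := (F y).map_update_smul ![a, b] 1 c b
    rwa [upd1, upd1] at this
  unfold Dd
  rw [h, fderiv_fun_const_smul ((hd _).differentiableAt) c]
  simp

lemma Dd_add_v (x v v' a b : V4) :
    Dd F x (v + v') a b = Dd F x v a b + Dd F x v' a b :=
  (fderiv ℝ (fun y => F y ![a, b]) x).map_add v v'

lemma Dd_smul_v (x v a b : V4) (c : ℝ) :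
    Dd F x (c • v) a b = c * Dd F x v a b :=
  (fderiv ℝ (fun y => F y ![a, b]) x).map_smul c v

lemma Dd_self (x v a : V4) : Dd F x v a a = 0 := by
  have h : (fun y => F y ![a, a]) = fun _ => (0 : ℝ) := by
    funext y
    exact (F y).map_eq_zero_of_eq ![a, a] (i := 0) (j := 1) rfl (by decide)
  unfold Dd
  rw [h, fderiv_fun_const]
  simp

lemma Dd_swap (x v a b : V4) : Dd F x v b a = - Dd F x v a b := by
  have h := Dd_self F hd x v (a + b)
  rw [Dd_add_a F hd, Dd_add_b F hd, Dd_add_b F hd, Dd_self F hd, Dd_self F hd] at h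
  linarith

end

noncomputable def Tt (F : V4 → AlternatingMap ℝ V4 ℝ (Fin 2)) (x a b c : V4) : ℝ :=
  Dd F x a b c - Dd F x b a c + Dd F x c a b

section
variable (F : V4 → AlternatingMap ℝ V4 ℝ (Fin 2))
  (hd : ∀ w : Fin 2 → V4, Differentiable ℝ fun y => F y w)
include hd

lemma Tt_add1 (x a a' b c : V4) :
    Tt F x (a + a') b c = Tt F x a b c + Tt F x a' b c := by
  unfold Tt
  rw [Dd_add_v F hd, Dd_add_a F hd, Dd_add_a F hd]; ring

lemma Tt_smul1 (x a b c : V4) (r : ℝ) :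
    Tt F x (r • a) b c = r * Tt F x a b c := by
  unfold Tt
  rw [Dd_smul_v F hd, Dd_smul_a F hd, Dd_smul_a F hd]; ring

lemma Tt_add2 (x a b b' c : V4) :
    Tt F x a (b + b') c = Tt F x a b c + Tt F x a b' c := by
  unfold Tt
  rw [Dd_add_a F hd, Dd_add_v F hd, Dd_add_b F hd]; ring

lemma Tt_smul2 (x a b c : V4) (r : ℝ) :
    Tt F x a (r • b) c = r * Tt F x a b c := by
  unfold Tt
  rw [Dd_smul_a F hd, Dd_smul_v F hd, Dd_smul_b F hd]; ring

lemma Tt_add3 (x a b c c' : V4) :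
    Tt F x a b (c + c') = Tt F x a b c + Tt F x a b c' := by
  unfold Tt
  rw [Dd_add_b F hd, Dd_add_b F hd, Dd_add_v F hd]; ring

lemma Tt_smul3 (x a b c : V4) (r : ℝ) :
    Tt F x a b (r • c) = r * Tt F x a b c := by
  unfold Tt
  rw [Dd_smul_b F hd, Dd_smul_b F hd, Dd_smul_v F hd]; ring

lemma Tt_alt12 (x a c : V4) : Tt F x a a c = 0 := by
  unfold Tt; rw [Dd_self F hd]; ring

lemma Tt_alt23 (x a b : V4) : Tt F x a b b = 0 := by
  unfold Tt; rw [Dd_self F hd]; ring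

lemma Tt_alt13 (x a b : V4) : Tt F x a b a = 0 := by
  unfold Tt
  rw [Dd_self F hd, Dd_swap F hd x a b a]; ring

lemma Tt_swap12 (x a b c : V4) : Tt F x b a c = - Tt F x a b c := by
  have h := Tt_alt12 F hd x (a + b) c
  rw [Tt_add1 F hd, Tt_add2 F hd, Tt_add2 F hd, Tt_alt12 F hd, Tt_alt12 F hd] at h
  linarith

lemma Tt_swap23 (x a b c : V4) : Tt F x a c b = - Tt F x a b c := by
  have h := Tt_alt23 F hd x a (b + c)
  rw [Tt_add2 F hd, Tt_add3 F hd, Tt_add3 F hd, Tt_alt23 F hd, Tt_alt23 F hd] at h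
  linarith

end

lemma extD_eq (F : V4 → AlternatingMap ℝ V4 ℝ (Fin 2)) (x : V4) (v : Fin 3 → V4) :
    extD (fun y w => F y w) x v = Tt F x (v 0) (v 1) (v 2) := by
  have h0 : (fun j => v ((0 : Fin 3).succAbove j)) = ![v 1, v 2] := by
    funext j; fin_cases j <;> rfl
  have h1 : (fun j => v ((1 : Fin 3).succAbove j)) = ![v 0, v 2] := by
    funext j; fin_cases j <;> rfl
  have h2 : (fun j => v ((2 : Fin 3).succAbove j)) = ![v 0, v 1] := by
    funext j; fin_cases j <;> rfl
  show (∑ i : Fin 3, (-1 : ℝ) ^ (i : ℕ) *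
      fderiv ℝ (fun y => F y (fun j => v (i.succAbove j))) x (v i)) =
    Tt F x (v 0) (v 1) (v 2)
  simp only [Fin.sum_univ_three, h0, h1, h2, Tt, Dd, Fin.val_zero, Fin.val_one, Fin.val_two]
  norm_num
  ring

lemma basis_expand (a : V4) : a = ∑ i, a i • e i := by
  funext j
  simp [e, Finset.sum_apply, Pi.single_apply]

lemma Tt_expand (F : V4 → AlternatingMap ℝ V4 ℝ (Fin 2))
    (hd : ∀ w : Fin 2 → V4, Differentiable ℝ fun y => F y w)
    (x a b c : V4) :
    Tt F x a b c = ∑ i, ∑ j, ∑ k,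
      a i * (b j * (c k * Tt F x (e i) (e j) (e k))) := by
  have s1 : ∀ b c : V4, Tt F x a b c = ∑ i, a i * Tt F x (e i) b c := by
    intro b c
    conv_lhs => rw [basis_expand a]
    refine (map_sum (AddMonoidHom.mk' (fun u => Tt F x u b c)
      (fun u u' => Tt_add1 F hd x u u' b c)) (fun i => a i • e i) Finset.univ).trans ?_
    exact Finset.sum_congr rfl fun i _ => Tt_smul1 F hd x (e i) b c (a i)
  have s2 : ∀ (a' : V4) (c : V4), Tt F x a' b c = ∑ j, b j * Tt F x a' (e j) c := by
    intro a' c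
    conv_lhs => rw [basis_expand b]
    refine (map_sum (AddMonoidHom.mk' (fun u => Tt F x a' u c)
      (fun u u' => Tt_add2 F hd x a' u u' c)) (fun j => b j • e j) Finset.univ).trans ?_
    exact Finset.sum_congr rfl fun j _ => Tt_smul2 F hd x a' (e j) c (b j)
  have s3 : ∀ (a' b' : V4), Tt F x a' b' c = ∑ k, c k * Tt F x a' b' (e k) := by
    intro a' b'
    conv_lhs => rw [basis_expand c]
    refine (map_sum (AddMonoidHom.mk' (fun u => Tt F x a' b' u)
      (fun u u' => Tt_add3 F hd x a' b' u u')) (fun k => c k • e k) Finset.univ).trans ?_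
    exact Finset.sum_congr rfl fun k _ => Tt_smul3 F hd x a' b' (e k) (c k)
  rw [s1]
  refine Finset.sum_congr rfl fun i _ => ?_
  rw [s2, Finset.mul_sum]
  refine Finset.sum_congr rfl fun j _ => ?_
  rw [s3, Finset.mul_sum, Finset.mul_sum]

attribute [irreducible] Dd Tt
set_option maxHeartbeats 1000000 in
/-- dF = 0 identically iff the transversal component of dF
vanishes in each of the four boosted frames at every point. -/
theorem homogeneous_maxwell_iff_flux_constraints
    (β γ : ℝ) (hβ0 : 0 < β) (hβ1 : β < 1)
    (hγ : γ = (1 - β ^ 2) ^ (-(1 / 2) : ℝ))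
    (F : V4 → AlternatingMap ℝ V4 ℝ (Fin 2))
    (hF : ∀ v : Fin 2 → V4, ContDiff ℝ (⊤ : ℕ∞) fun x => F x v) :
    (∀ (x : V4) (v : Fin 3 → V4), extD (fun y w => F y w) x v = 0) ↔
      ∀ (x : V4) (μ : Fin 4),
        extD (fun y w => F y w) x (fun k => Xfr β γ μ k) = 0 := by

  have hd : ∀ w : Fin 2 → V4, Differentiable ℝ fun y => F y w :=
    fun w => (hF w).differentiable (by simp)
  constructor
  · intro h x μ; exact h x _
  · intro H x v
    have hb2 : (0 : ℝ) < 1 - β ^ 2 := by nlinarith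
    have hγpos : 0 < γ := hγ ▸ Real.rpow_pos_of_pos hb2 _
    have hβγ : β * γ ≠ 0 := (mul_pos hβ0 hγpos).ne'
    have Z123 : Tt F x (e 1) (e 2) (e 3) = 0 :=
      (extD_eq F x _).symm.trans (H x 0)
    have Z023 : Tt F x (e 0) (e 2) (e 3) = 0 := by
      have h : Tt F x ((β * γ) • e 0 + γ • e 1) (e 2) (e 3) = 0 :=
        (extD_eq F x _).symm.trans (H x 1)
      rw [Tt_add1 F hd, Tt_smul1 F hd, Tt_smul1 F hd, Z123, mul_zero, add_zero] at h
      exact (mul_eq_zero.mp h).resolve_left hβγ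
    have Z103 : Tt F x (e 1) (e 0) (e 3) = 0 := by
      have h : Tt F x (e 1) ((β * γ) • e 0 + γ • e 2) (e 3) = 0 :=
        (extD_eq F x _).symm.trans (H x 2)
      rw [Tt_add2 F hd, Tt_smul2 F hd, Tt_smul2 F hd, Z123, mul_zero, add_zero] at h
      exact (mul_eq_zero.mp h).resolve_left hβγ
    have Z120 : Tt F x (e 1) (e 2) (e 0) = 0 := by
      have h : Tt F x (e 1) (e 2) ((β * γ) • e 0 + γ • e 3) = 0 :=
        (extD_eq F x _).symm.trans (H x 3)
      rw [Tt_add3 F hd, Tt_smul3 F hd, Tt_smul3 F hd, Z123, mul_zero, add_zero] at h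
      exact (mul_eq_zero.mp h).resolve_left hβγ
    have sw12 : ∀ a b c, Tt F x a b c = 0 → Tt F x b a c = 0 := fun a b c h => by
      rw [Tt_swap12 F hd x a b c, h, neg_zero]
    have sw23 : ∀ a b c, Tt F x a b c = 0 → Tt F x a c b = 0 := fun a b c h => by
      rw [Tt_swap23 F hd x a b c, h, neg_zero]
    have Z013 : Tt F x (e 0) (e 1) (e 3) = 0 := sw12 _ _ _ Z103
    have Z012 : Tt F x (e 0) (e 1) (e 2) = 0 := sw12 _ _ _ (sw23 _ _ _ Z120)
    have hbasis : ∀ i j k : Fin 4, Tt F x (e i) (e j) (e k) = 0 := by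
      intro i j k
      fin_cases i <;> fin_cases j <;> fin_cases k <;>
        first
          | exact Tt_alt12 F hd x _ _
          | exact Tt_alt13 F hd x _ _
          | exact Tt_alt23 F hd x _ _
          | exact Z123
          | exact Z023
          | exact Z013
          | exact Z012
          | exact sw12 _ _ _ Z123
          | exact sw23 _ _ _ Z123
          | exact sw12 _ _ _ (sw23 _ _ _ Z123)
          | exact sw23 _ _ _ (sw12 _ _ _ Z123)
          | exact sw12 _ _ _ (sw23 _ _ _ (sw12 _ _ _ Z123))
          | exact sw12 _ _ _ Z023
          | exact sw23 _ _ _ Z023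
          | exact sw12 _ _ _ (sw23 _ _ _ Z023)
          | exact sw23 _ _ _ (sw12 _ _ _ Z023)
          | exact sw12 _ _ _ (sw23 _ _ _ (sw12 _ _ _ Z023))
          | exact sw12 _ _ _ Z013
          | exact sw23 _ _ _ Z013
          | exact sw12 _ _ _ (sw23 _ _ _ Z013)
          | exact sw23 _ _ _ (sw12 _ _ _ Z013)
          | exact sw12 _ _ _ (sw23 _ _ _ (sw12 _ _ _ Z013))
          | exact sw12 _ _ _ Z012
          | exact sw23 _ _ _ Z012
          | exact sw12 _ _ _ (sw23 _ _ _ Z012)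
          | exact sw23 _ _ _ (sw12 _ _ _ Z012)
          | exact sw12 _ _ _ (sw23 _ _ _ (sw12 _ _ _ Z012))
    rw [extD_eq F x v, Tt_expand F hd x]
    simp only [hbasis, mul_zero, Finset.sum_const_zero]
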